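/- For every x ∈ (0,1] and every n ≥ 1, the length of the basic interval of order n containing x satisfies |I_n(x)| ≥ β^{−(n + t_{n − k_n*(x)} + 1)}. -/

import Mathlib

open MeasureTheory Filter Set

noncomputable section

/-- The β-transformation on `(0,1]`: `T_β x = βx − ⌈βx⌉ + 1`. -/
def Tbeta (β x : ℝ) : ℝ := β * x - ⌈β * x⌉ + 1

/-- The digits of the β-expansion, 0-indexed: `eps β x n` is the `(n+1)`-st digit
`ε_{n+1}(x,β) = ⌈β T_β^n x⌉ − 1`. -/
def eps (β x : ℝ) (n : ℕ) : ℤ := ⌈β * (Tbeta β)^[n] x⌉ - 1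

/-- The basic interval of order `n` containing `x`:
all `y ∈ (0,1]` whose first `n` digits agree with those of `x`. -/
def In (β x : ℝ) (n : ℕ) : Set ℝ := {y ∈ Ioc (0:ℝ) 1 | ∀ j < n, eps β y j = eps β x j}

/-- The length of a set (Lebesgue measure). -/
def len (s : Set ℝ) : ℝ := (volume s).toReal

/-- `tseq β n = t_n`: the maximal length of the block of zero digits of the
β-expansion of `1` immediately following position `n` (digits `ε*_{n+1},…,ε*_{n+k}`). -/
def tseq (β : ℝ) (n : ℕ) : ℕ := sSup {k : ℕ | ∀ j < k, eps β 1 (n + j) = 0}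

/-- `Gam β n = Γ_n = max_{1 ≤ k ≤ n} t_k`. -/
def Gam (β : ℝ) (n : ℕ) : ℕ := Finset.sup (Finset.Icc 1 n) (tseq β)

/-- `lam β = λ(β) = limsup_n Γ_n / n`. -/
def lam (β : ℝ) : ℝ := Filter.limsup (fun n : ℕ => (Gam β n : ℝ) / n) atTop

/-- `kstar β x n = k_n^*(x)`: the smallest `k ≥ 0` such that
`(ε_{k+1}(x),…,ε_n(x)) = (ε*_1,…,ε*_{n−k})`. -/
def kstar (β x : ℝ) (n : ℕ) : ℕ := sInf {k : ℕ | ∀ i < n - k, eps β x (k + i) = eps β 1 i}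

/-- `tau β x = τ(x) = limsup_n t_{n − k_n^*(x)} / n`. -/
def tau (β x : ℝ) : ℝ :=
  Filter.limsup (fun n : ℕ => (tseq β (n - kstar β x n) : ℝ) / n) atTop

/-- The upper density `\overline{D}(x) = limsup_n (−log_β |I_n(x)|)/n`. -/
def upperD (β x : ℝ) : ℝ :=
  Filter.limsup (fun n : ℕ => -Real.logb β (len (In β x n)) / n) atTop

/-- The lower density `\underline{D}(x) = liminf_n (−log_β |I_n(x)|)/n`. -/
def lowerD (β x : ℝ) : ℝ :=
  Filter.liminf (fun n : ℕ => -Real.logb β (len (In β x n)) / n) atTop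

/-- The basic interval (cylinder) associated to a finite word `w` of digits:
all `x ∈ (0,1]` whose β-expansion starts with `w`. -/
def cyl (β : ℝ) (w : List ℤ) : Set ℝ :=
  {x ∈ Ioc (0:ℝ) 1 | ∀ j < w.length, eps β x j = w.getD j 0}

/-- A finite word is admissible if it occurs as the initial digits of some `x ∈ (0,1]`. -/
def Admissible (β : ℝ) (w : List ℤ) : Prop := (cyl β w).Nonempty

/-- A basic interval is full if its length is `β^{−n}` where `n` is the order. -/
def IsFull (β : ℝ) (w : List ℤ) : Prop := len (cyl β w) = β ^ (-(w.length : ℤ))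

/-- The word `(ε*_1,…,ε*_n)` of the first `n` digits of the β-expansion of `1`. -/
def estarWord (β : ℝ) (n : ℕ) : List ℤ := (List.range n).map (eps β 1)

/-- The interior of a set relative to the subspace `[0,1]`
(for `S ⊆ [0,1]` this is exactly the interior of `S` in the topology of `[0,1]`). -/
def intIn01 (S : Set ℝ) : Set ℝ := Icc 0 1 \ closure (Icc 0 1 \ S)

/-!
If `y` lies strictly right of the left endpoint `x - β^{-n} T^n x` of `I_n(x)` and not right of
the right endpoint `x + β^{-m} (1 - T^m x)` of any `I_m(x)` with `m ≤ n`, then `y ∈ I_n(x)`.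
With `k = k_n^*(x)`, each of these right endpoints lies at or beyond
`x + β^{-n} (T^{n-k} 1 - T^n x)`, so `I_n(x)` contains an interval of length
`β^{-n} T^{n-k} 1`. The `t_{n-k}` zero digits of the expansion of `1` after place `n - k`,
followed by a nonzero one, give `T^{n-k} 1 > β^{-(t_{n-k} + 1)}`.
-/

theorem Tbeta_mem_Ioc (β z : ℝ) : Tbeta β z ∈ Ioc (0:ℝ) 1 := by
  have := Int.ceil_lt_add_one (β * z)
  have := Int.le_ceil (β * z)
  constructor <;> simp only [Tbeta] <;> linarith

theorem iterate_Tbeta_pos (β : ℝ) {z : ℝ} (hz : 0 < z) : ∀ j, 0 < (Tbeta β)^[j] z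
  | 0 => hz
  | j + 1 => by rw [Function.iterate_succ_apply']; exact (Tbeta_mem_Ioc β _).1

theorem iterate_Tbeta_le_one (β : ℝ) {z : ℝ} (hz : z ≤ 1) : ∀ j, (Tbeta β)^[j] z ≤ 1
  | 0 => hz
  | j + 1 => by rw [Function.iterate_succ_apply']; exact (Tbeta_mem_Ioc β _).2

theorem iterate_Tbeta_succ (β z : ℝ) (j : ℕ) :
    (Tbeta β)^[j + 1] z = β * (Tbeta β)^[j] z - eps β z j := by
  rw [Function.iterate_succ_apply']
  simp only [Tbeta, eps]
  push_cast
  ring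

theorem eps_add (β z : ℝ) (m i : ℕ) : eps β z (m + i) = eps β ((Tbeta β)^[m] z) i := by
  simp only [eps, Nat.add_comm m i, Function.iterate_add_apply]

theorem eps_succ (β z : ℝ) (j : ℕ) : eps β z (j + 1) = eps β (Tbeta β z) j := by
  simp only [eps, Function.iterate_succ_apply]

theorem eps_lt (β z : ℝ) (j : ℕ) : (eps β z j : ℝ) < β * (Tbeta β)^[j] z := by
  have h : 0 < (Tbeta β)^[j + 1] z := by
    rw [Function.iterate_succ_apply']; exact (Tbeta_mem_Ioc β _).1
  rw [iterate_Tbeta_succ] at h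
  linarith

section

variable {β : ℝ}

theorem eps_nonneg (hβ : 0 < β) {z : ℝ} (hz : 0 < z) (j : ℕ) : 0 ≤ eps β z j := by
  have := Int.ceil_pos.mpr (mul_pos hβ (iterate_Tbeta_pos β hz j))
  simp only [eps]
  omega

theorem one_lt_mul_iterate_of_one_le_eps {z : ℝ} {j : ℕ} (h : 1 ≤ eps β z j) :
    1 < β * (Tbeta β)^[j] z := by
  have : (1 : ℤ) < ⌈β * (Tbeta β)^[j] z⌉ := by simp only [eps] at h; omega
  exact_mod_cast Int.lt_ceil.mp this

theorem iterate_Tbeta_le_pow_mul (hβ : 0 < β) {z : ℝ} (hz : 0 < z) :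
    ∀ n, (Tbeta β)^[n] z ≤ β ^ n * z
  | 0 => by simp
  | n + 1 => by
    have ih := iterate_Tbeta_le_pow_mul hβ hz n
    have : (0 : ℝ) ≤ eps β z n := by exact_mod_cast eps_nonneg hβ hz n
    rw [iterate_Tbeta_succ, pow_succ']
    nlinarith

theorem iterate_Tbeta_sub_iterate_Tbeta {y z : ℝ} {j : ℕ}
    (h : ∀ i < j, eps β y i = eps β z i) :
    (Tbeta β)^[j] y - (Tbeta β)^[j] z = β ^ j * (y - z) := by
  induction j with
  | zero => simp
  | succ j ih =>
    rw [iterate_Tbeta_succ, iterate_Tbeta_succ, h j j.lt_succ_self, pow_succ',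
      mul_assoc, ← ih fun i hi => h i (Nat.lt_succ_of_lt hi)]
    ring

theorem iterate_Tbeta_add_of_eps_eq_zero {z : ℝ} {q κ : ℕ}
    (h : ∀ j < κ, eps β z (q + j) = 0) :
    (Tbeta β)^[q + κ] z = β ^ κ * (Tbeta β)^[q] z := by
  induction κ with
  | zero => simp
  | succ κ ih =>
    rw [← add_assoc, iterate_Tbeta_succ, h κ κ.lt_succ_self,
      ih fun j hj => h j (Nat.lt_succ_of_lt hj), pow_succ']
    push_cast
    ring

theorem bddAbove_zero_run (hβ : 1 < β) (q : ℕ) :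
    BddAbove {k : ℕ | ∀ j < k, eps β 1 (q + j) = 0} := by
  have hw := iterate_Tbeta_pos β one_pos q
  obtain ⟨N, hN⟩ := pow_unbounded_of_one_lt ((Tbeta β)^[q] 1)⁻¹ hβ
  refine ⟨N, fun κ hκ => ?_⟩
  by_contra! hNκ
  have h1 : β ^ κ * (Tbeta β)^[q] 1 ≤ 1 := by
    rw [← iterate_Tbeta_add_of_eps_eq_zero hκ]
    exact iterate_Tbeta_le_one β le_rfl _
  have h2 : β ^ N ≤ β ^ κ := pow_le_pow_right₀ hβ.le hNκ.le
  rw [inv_lt_iff_one_lt_mul₀ hw] at hN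
  nlinarith

theorem eps_one_add_eq_zero_of_lt_tseq (hβ : 1 < β) (q : ℕ) :
    ∀ j < tseq β q, eps β 1 (q + j) = 0 :=
  Nat.sSup_mem ⟨0, by simp⟩ (bddAbove_zero_run hβ q)

theorem eps_one_add_tseq_ne_zero (hβ : 1 < β) (q : ℕ) : eps β 1 (q + tseq β q) ≠ 0 := by
  intro h
  have hmem := eps_one_add_eq_zero_of_lt_tseq hβ q
  have : tseq β q + 1 ≤ tseq β q := le_csSup (bddAbove_zero_run hβ q) fun j hj => by
    rcases Nat.lt_succ_iff_lt_or_eq.mp hj with hj | rfl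
    exacts [hmem j hj, h]
  omega

theorem inv_pow_tseq_succ_lt (hβ : 1 < β) (q : ℕ) :
    (β ^ (tseq β q + 1))⁻¹ < (Tbeta β)^[q] 1 := by
  have hβ0 : 0 < β := one_pos.trans hβ
  have hdigit : 1 ≤ eps β 1 (q + tseq β q) := by
    have := eps_nonneg hβ0 one_pos (q + tseq β q)
    have := eps_one_add_tseq_ne_zero hβ q
    omega
  have h := one_lt_mul_iterate_of_one_le_eps hdigit
  rw [iterate_Tbeta_add_of_eps_eq_zero (eps_one_add_eq_zero_of_lt_tseq hβ q)] at h
  rw [inv_lt_iff_one_lt_mul₀' (by positivity), pow_succ']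
  linarith

theorem eps_eq_of_sub_bounds (hβ : 0 < β) {x y : ℝ} {n : ℕ}
    (hlow : -(Tbeta β)^[n] x < β ^ n * (y - x))
    (hup : ∀ m ≤ n, β ^ m * (y - x) ≤ 1 - (Tbeta β)^[m] x) :
    ∀ j < n, eps β y j = eps β x j := by
  induction n generalizing x y with
  | zero => intro j hj; omega
  | succ n ih =>
    have hlow₁ : -Tbeta β x < β * (y - x) := by
      have := iterate_Tbeta_le_pow_mul hβ (Tbeta_mem_Ioc β x).1 n
      rw [Function.iterate_succ_apply, pow_succ, mul_assoc] at hlow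
      nlinarith [pow_pos hβ n]
    have hup₁ : β * (y - x) ≤ 1 - Tbeta β x := by simpa using hup 1 (by omega)
    have h₀ : eps β y 0 = eps β x 0 := by
      have : ⌈β * y⌉ = ⌈β * x⌉ := by
        rw [Int.ceil_eq_iff]
        simp only [Tbeta] at hlow₁ hup₁
        constructor <;> linarith
      simp [eps, this]
    have hTy : Tbeta β y - Tbeta β x = β * (y - x) := by
      simpa using iterate_Tbeta_sub_iterate_Tbeta (j := 1) fun i hi => by
        rwa [Nat.lt_one_iff.mp hi]
    have ih' := ih (y := Tbeta β y)
      (by rw [hTy, ← mul_assoc, ← pow_succ, ← Function.iterate_succ_apply]; exact hlow)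
      (fun m hm => by
        rw [hTy, ← mul_assoc, ← pow_succ, ← Function.iterate_succ_apply]
        exact hup (m + 1) (by omega))
    rintro (_ | j) hj
    · exact h₀
    · rw [eps_succ, eps_succ]
      exact ih' j (by omega)

theorem Ioc_subset_In (hβ : 0 < β) {x : ℝ} (hx : 0 < x) {n : ℕ} {b : ℝ}
    (hb : ∀ m ≤ n, β ^ m * (b - x) ≤ 1 - (Tbeta β)^[m] x) :
    Ioc (x - (Tbeta β)^[n] x / β ^ n) b ⊆ In β x n := by
  intro y ⟨hyl, hyb⟩
  have hβn : 0 < β ^ n := pow_pos hβ n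
  have hlow : -(Tbeta β)^[n] x < β ^ n * (y - x) := by
    rw [sub_lt_comm, lt_div_iff₀ hβn] at hyl
    linarith
  have hup : ∀ m ≤ n, β ^ m * (y - x) ≤ 1 - (Tbeta β)^[m] x := fun m hm =>
    (mul_le_mul_of_nonneg_left (by linarith) (pow_pos hβ m).le).trans (hb m hm)
  refine ⟨⟨?_, ?_⟩, eps_eq_of_sub_bounds hβ hlow hup⟩
  · have := iterate_Tbeta_le_pow_mul hβ hx n
    nlinarith
  · simpa using hup 0 (Nat.zero_le n)

theorem eps_kstar_add (x : ℝ) (n : ℕ) :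
    ∀ i < n - kstar β x n, eps β x (kstar β x n + i) = eps β 1 i :=
  Nat.sInf_mem (s := {k | ∀ i < n - k, eps β x (k + i) = eps β 1 i}) ⟨n, fun i hi => by omega⟩

theorem exists_eps_ne_of_lt_kstar {x : ℝ} {n m : ℕ} (hm : m < kstar β x n) :
    ∃ i < n - m, eps β x (m + i) ≠ eps β 1 i := by
  by_contra! h
  exact Nat.notMem_of_lt_sInf hm h

/-- Since `z ≤ 1`, the first digit where `z` and `1` differ is smaller for `z`. -/
theorem one_sub_iterate_succ_le (hβ : 0 < β) {z : ℝ} (hz : z ≤ 1) {j : ℕ}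
    (hagree : ∀ i < j, eps β 1 i = eps β z i) (hne : eps β z j ≠ eps β 1 j) :
    1 - (Tbeta β)^[j + 1] z ≤ β ^ (j + 1) * (1 - z) := by
  have hsub := iterate_Tbeta_sub_iterate_Tbeta hagree
  have hle : eps β z j ≤ eps β 1 j := by
    have : β * (Tbeta β)^[j] z ≤ β * (Tbeta β)^[j] 1 := by
      have : 0 ≤ β ^ j * (1 - z) := mul_nonneg (pow_pos hβ j).le (by linarith)
      nlinarith
    simpa [eps] using Int.ceil_le_ceil this
  have hlt : ((eps β z j + 1 : ℤ) : ℝ) ≤ eps β 1 j := by exact_mod_cast (by omega : _)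
  have := eps_lt β 1 j
  rw [iterate_Tbeta_succ, pow_succ', mul_assoc, ← hsub]
  push_cast at hlt
  linarith

theorem iterate_kstar_sub_le_of_kstar_le (hβ : 0 < β) {x : ℝ} {n m : ℕ} (hkm : kstar β x n ≤ m)
    (hmn : m ≤ n) :
    (Tbeta β)^[n - kstar β x n] 1 - (Tbeta β)^[n] x ≤ β ^ (n - m) * (1 - (Tbeta β)^[m] x) := by
  set k := kstar β x n
  have hagree : ∀ i < n - m, eps β ((Tbeta β)^[m - k] 1) i = eps β ((Tbeta β)^[m] x) i :=
    fun i hi => by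
      rw [← eps_add, ← eps_add, ← eps_kstar_add x n (m - k + i) (by omega)]
      congr 1
      omega
  have hsub := iterate_Tbeta_sub_iterate_Tbeta hagree
  rw [← Function.iterate_add_apply, ← Function.iterate_add_apply,
    show n - m + (m - k) = n - k by omega, Nat.sub_add_cancel hmn] at hsub
  have := iterate_Tbeta_le_one β le_rfl (m - k)
  rw [hsub]
  gcongr

/-- For `m ≥ k = k_n^*(x)` the next `n - m` digits of `T^m x` are those of `T^{m-k} 1`; for
`m < k`, passing the first digit where `T^m x` differs from the expansion of `1` leads to a
larger `m` whose right endpoint `x + β^{-m} (1 - T^m x)` is no farther right. -/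
theorem iterate_kstar_sub_le {x : ℝ} (hβ : 0 < β) (hx : x ≤ 1) {n : ℕ} (m : ℕ) (hmn : m ≤ n) :
    (Tbeta β)^[n - kstar β x n] 1 - (Tbeta β)^[n] x ≤ β ^ (n - m) * (1 - (Tbeta β)^[m] x) := by
  rcases le_or_gt (kstar β x n) m with hkm | hmk
  · exact iterate_kstar_sub_le_of_kstar_le hβ hkm hmn
  have hex := exists_eps_ne_of_lt_kstar hmk
  obtain ⟨j, ⟨hjn, hjne⟩, hmin⟩ : ∃ j, (j < n - m ∧ eps β x (m + j) ≠ eps β 1 j) ∧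
      ∀ i < j, ¬(i < n - m ∧ eps β x (m + i) ≠ eps β 1 i) :=
    ⟨Nat.find hex, Nat.find_spec hex, fun i hi => Nat.find_min hex hi⟩
  have hagree : ∀ i < j, eps β 1 i = eps β ((Tbeta β)^[m] x) i := fun i hi => by
    rw [← eps_add]
    by_contra h
    exact hmin i hi ⟨by omega, Ne.symm h⟩
  have hstep := one_sub_iterate_succ_le hβ (iterate_Tbeta_le_one β hx m) hagree
    (by rwa [← eps_add])
  have ih := iterate_kstar_sub_le hβ hx (n := n) (m + (j + 1)) (by omega)
  rw [show (Tbeta β)^[m + (j + 1)] x = (Tbeta β)^[j + 1] ((Tbeta β)^[m] x) by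
    rw [Nat.add_comm, Function.iterate_add_apply]] at ih
  calc _ ≤ β ^ (n - (m + (j + 1))) * (1 - (Tbeta β)^[j + 1] ((Tbeta β)^[m] x)) := ih
    _ ≤ β ^ (n - (m + (j + 1))) * (β ^ (j + 1) * (1 - (Tbeta β)^[m] x)) := by gcongr
    _ = β ^ (n - m) * (1 - (Tbeta β)^[m] x) := by
      rw [← mul_assoc, ← pow_add, show n - (m + (j + 1)) + (j + 1) = n - m by omega]
termination_by n - m

end

theorem sub_le_len_of_Ioc_subset {a b : ℝ} {s : Set ℝ} (h : Ioc a b ⊆ s) (hs : volume s ≠ ⊤) :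
    b - a ≤ len s := by
  rw [len, ← ENNReal.ofReal_le_iff_le_toReal hs, ← Real.volume_Ioc]
  exact measure_mono h

theorem iterate_kstar_div_pow_le_len_In {β : ℝ} (hβ : 0 < β) {x : ℝ} (hx : x ∈ Ioc (0:ℝ) 1)
    (n : ℕ) :
    (Tbeta β)^[n - kstar β x n] 1 / β ^ n ≤ len (In β x n) := by
  have hβn : 0 < β ^ n := pow_pos hβ n
  set b := x + ((Tbeta β)^[n - kstar β x n] 1 - (Tbeta β)^[n] x) / β ^ n
  have hb : ∀ m ≤ n, β ^ m * (b - x) ≤ 1 - (Tbeta β)^[m] x := fun m hm => by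
    rw [show b - x = ((Tbeta β)^[n - kstar β x n] 1 - (Tbeta β)^[n] x) / β ^ n by ring,
      mul_div_assoc', div_le_iff₀ hβn, ← pow_mul_pow_sub β hm, mul_comm (1 - _), mul_assoc]
    exact mul_le_mul_of_nonneg_left (iterate_kstar_sub_le hβ hx.2 m hm) (pow_pos hβ m).le
  have hfin : volume (In β x n) ≠ ⊤ :=
    ne_top_of_le_ne_top (by simp) (measure_mono fun y (hy : y ∈ In β x n) => hy.1)
  calc (Tbeta β)^[n - kstar β x n] 1 / β ^ n = b - (x - (Tbeta β)^[n] x / β ^ n) := by ring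
    _ ≤ len (In β x n) := sub_le_len_of_Ioc_subset (Ioc_subset_In hβ hx.1 hb) hfin

theorem len_In_lower_bound_general (β : ℝ) (hβ : 1 < β) (x : ℝ) (hx : x ∈ Ioc (0:ℝ) 1)
    (n : ℕ) :
    β ^ (-((n : ℤ) + (tseq β (n - kstar β x n) : ℤ) + 1)) ≤ len (In β x n) := by
  have hβ0 : 0 < β := one_pos.trans hβ
  calc β ^ (-((n : ℤ) + (tseq β (n - kstar β x n) : ℤ) + 1))
      = (β ^ (tseq β (n - kstar β x n) + 1))⁻¹ / β ^ n := by
        rw [← zpow_natCast, ← zpow_natCast, ← zpow_neg, ← zpow_sub₀ hβ0.ne']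
        push_cast
        ring_nf
    _ ≤ (Tbeta β)^[n - kstar β x n] 1 / β ^ n := by
        gcongr
        exact (inv_pow_tseq_succ_lt hβ _).le
    _ ≤ len (In β x n) := iterate_kstar_div_pow_le_len_In hβ0 hx n

/-- For every `x ∈ (0,1]` and every `n ≥ 1`,
`|I_n(x)| ≥ β^{−(n + t_{n − k_n^*(x)} + 1)}`. -/
theorem len_In_lower_bound (β : ℝ) (hβ : 1 < β) (x : ℝ) (hx : x ∈ Ioc (0:ℝ) 1)
    (n : ℕ) (hn : 1 ≤ n) :
    β ^ (-((n : ℤ) + (tseq β (n - kstar β x n) : ℤ) + 1)) ≤ len (In β x n) :=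
  len_In_lower_bound_general β hβ x hx n
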